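/- Let 0 < q < 1/2 and let M : ℍ → 𝕆 be a deterministic program without low-security inputs. Then GE[U](M) ≤ q if and only if M is non-interferent (i.e., M is a constant function). In particular, for programs without low-security inputs the minimum nonzero value of GE[U] is at least 1/2. -/

import Mathlib

/-!
Under the uniform prior the guessing entropy of a set of `k` equally likely secrets is
`(k + 1) / 2`. Writing `n = |ℍ|` and `k_o = |M⁻¹(o)|`, so that `∑ₒ k_o = n`, this gives
`GE[U](M) = ∑ₒ k_o (n - k_o) / (2n)`. For a constant `M` every `k_o` is `0` or `n`, so
`GE[U](M) = 0`; otherwise every `k_o ≤ n - 1`, so `k_o (n - k_o) ≥ k_o` and `GE[U](M) ≥ 1/2`.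
-/

/-- Guessing entropy of a (sub)distribution `p` on a finite type `X`:
`𝓖(p) = Σ_{1≤i≤m} i · p(x_i)` with `x_1, …, x_m` sorted so that
`p(x_i) ≥ p(x_j)` whenever `i ≤ j`. -/
noncomputable def guess {X : Type*} [Fintype X] (p : X → ℝ) : ℝ :=
  ∑ i : Fin (Fintype.card X), ((i : ℕ) + 1 : ℝ) *
    p ((Fintype.equivFin X).symm
      (Tuple.sort (fun j => -p ((Fintype.equivFin X).symm j)) i))

/-- The uniform distribution on a finite type. -/
noncomputable def unif (X : Type*) [Fintype X] : X → ℝ :=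
  fun _ => (Fintype.card X : ℝ)⁻¹

variable {Hi Oi : Type*}

/-- Probability `μ(O = o)` where `O = M(H)` (no low-security inputs). -/
noncomputable def pO [Fintype Hi] [DecidableEq Oi] (M : Hi → Oi) (μ : Hi → ℝ) (o : Oi) :
    ℝ := ∑ h, if M h = o then μ h else 0

/-- Conditional guessing entropy `𝓖[μ](H|O)` where `O = M(H)`. -/
noncomputable def condGuessHO [Fintype Hi] [Fintype Oi] [DecidableEq Oi]
    (M : Hi → Oi) (μ : Hi → ℝ) : ℝ :=
  ∑ o : Oi, pO M μ o * guess (fun h : Hi => (if M h = o then μ h else 0) / pO M μ o)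

/-- Guessing-entropy-based QIF for programs without low-security inputs:
`GE[μ](M) = 𝓖[μ](H) − 𝓖[μ](H|O)`. -/
noncomputable def GE0 [Fintype Hi] [Fintype Oi] [DecidableEq Oi]
    (M : Hi → Oi) (μ : Hi → ℝ) : ℝ :=
  guess μ - condGuessHO M μ

open Finset

lemma sum_range_natCast_add_one (k : ℕ) : ∑ i ∈ range k, ((i : ℝ) + 1) = k * (k + 1) / 2 := by
  induction k with
  | zero => simp
  | succ k ih => rw [sum_range_succ, ih]; push_cast; ring

lemma Fin.mem_iff_lt_card_of_isLowerSet {n : ℕ} {S : Finset (Fin n)}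
    (hS : IsLowerSet (S : Set (Fin n))) (i : Fin n) : i ∈ S ↔ (i : ℕ) < #S := by
  constructor
  · intro hi
    have := card_le_card fun j (hj : j ∈ Iic i) => hS (mem_Iic.mp hj) hi
    rw [Fin.card_Iic] at this
    omega
  · intro hi
    by_contra hiS
    have := card_le_card fun j (hj : j ∈ S) =>
      mem_Iio.mpr (lt_of_not_ge fun hij => hiS (hS hij hj))
    rw [Fin.card_Iio] at this
    omega

section Guess

variable {X : Type*} [Fintype X]

lemma exists_equiv_antitone_guess_eq (p : X → ℝ) :
    ∃ τ : Fin (Fintype.card X) ≃ X, Antitone (p ∘ τ) ∧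
      guess p = ∑ i : Fin (Fintype.card X), ((i : ℕ) + 1 : ℝ) * p (τ i) := by
  let f : Fin (Fintype.card X) → ℝ := fun j => -p ((Fintype.equivFin X).symm j)
  refine ⟨(Tuple.sort f).trans (Fintype.equivFin X).symm, fun i j hij => ?_, rfl⟩
  simpa [f] using Tuple.monotone_sort f hij

lemma guess_ite (P : X → Prop) [DecidablePred P] {a : ℝ} (ha : 0 ≤ a) :
    guess (fun x => if P x then a else 0) = a * (#{x | P x} * (#{x | P x} + 1)) / 2 := by
  obtain rfl | ha := ha.eq_or_lt
  · simp [guess]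
  obtain ⟨τ, hanti, hguess⟩ := exists_equiv_antitone_guess_eq fun x => if P x then a else 0
  set k := #{x | P x}
  set S := ({x | P x} : Finset X).map τ.symm.toEmbedding
  have hmem : ∀ i, i ∈ S ↔ P (τ i) := fun i => by simp [S, mem_map_equiv]
  have hS : IsLowerSet (S : Set (Fin (Fintype.card X))) := by
    intro i j hji hi
    rw [mem_coe, hmem] at hi ⊢
    by_contra hj
    have := hanti hji
    simp only [Function.comp_apply, hi, hj, if_true, if_false] at this
    linarith
  have hlt : ∀ i : Fin (Fintype.card X), P (τ i) ↔ (i : ℕ) < k := fun i => by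
    rw [← hmem, Fin.mem_iff_lt_card_of_isLowerSet hS, card_map]
  have hfilter : (range (Fintype.card X)).filter (· < k) = range k := by
    ext i
    simp only [mem_filter, mem_range, and_iff_right_iff_imp]
    exact fun hi => hi.trans_le (card_le_univ _)
  calc guess (fun x => if P x then a else 0)
      = ∑ i : Fin (Fintype.card X), if (i : ℕ) < k then ((i : ℕ) + 1 : ℝ) * a else 0 := by
        rw [hguess]
        exact sum_congr rfl fun i _ => by simp only [hlt, mul_ite, mul_zero]
    _ = ∑ i ∈ range k, ((i : ℝ) + 1) * a := by
        rw [Fin.sum_univ_eq_sum_range (fun i => if i < k then ((i : ℝ) + 1) * a else 0),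
          ← sum_filter, hfilter]
    _ = a * (k * (k + 1)) / 2 := by
        rw [← sum_mul, sum_range_natCast_add_one]
        ring

end Guess

lemma guess_unif (X : Type*) [Fintype X] [Nonempty X] :
    guess (unif X) = ((Fintype.card X : ℝ) + 1) / 2 := by
  have hn : (Fintype.card X : ℝ) ≠ 0 := by positivity
  have := guess_ite (fun _ : X => True) (inv_nonneg.mpr (Nat.cast_nonneg (Fintype.card X)))
  simp only [if_true, filter_true, card_univ] at this
  unfold unif
  rw [this]
  field_simp

section Uniform

variable [Fintype Hi] [DecidableEq Oi]

lemma pO_unif (M : Hi → Oi) (o : Oi) :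
    pO M (unif Hi) o = #{h | M h = o} / Fintype.card Hi := by
  simp only [pO, ← sum_filter, unif, sum_const, nsmul_eq_mul, div_eq_mul_inv]

variable [Fintype Oi]

lemma sum_card_fiber (M : Hi → Oi) : ∑ o, (#{h | M h = o} : ℝ) = Fintype.card Hi := by
  exact_mod_cast (card_eq_sum_card_fiberwise fun h _ => mem_univ (M h)).symm

lemma condGuessHO_unif (M : Hi → Oi) :
    condGuessHO M (unif Hi) =
      ∑ o, (#{h | M h = o} : ℝ) * (#{h | M h = o} + 1) / (2 * Fintype.card Hi) := by
  refine sum_congr rfl fun o _ => ?_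
  set k : ℝ := ((#{h | M h = o} : ℕ) : ℝ) with hk
  have hcond : (fun h => (if M h = o then unif Hi h else 0) / pO M (unif Hi) o) =
      fun h => if M h = o then k⁻¹ else 0 := by
    funext h
    have : Nonempty Hi := ⟨h⟩
    have : (Fintype.card Hi : ℝ) ≠ 0 := by positivity
    rw [pO_unif, ← hk, unif]
    by_cases hMh : M h = o
    · rw [if_pos hMh, if_pos hMh]
      field_simp
    · rw [if_neg hMh, if_neg hMh, zero_div]
  rw [hcond, guess_ite _ (by positivity), pO_unif, ← hk]
  rcases eq_or_ne k 0 with hk0 | hk0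
  · simp [hk0]
  · field_simp

lemma GE0_unif (M : Hi → Oi) :
    GE0 M (unif Hi) =
      ∑ o, (#{h | M h = o} : ℝ) * (Fintype.card Hi - #{h | M h = o}) / (2 * Fintype.card Hi) := by
  rcases isEmpty_or_nonempty Hi with hHi | hHi
  · have := (Fintype.equivFin Hi).symm.isEmpty
    simp [GE0, guess, condGuessHO, pO]
  have hn : (Fintype.card Hi : ℝ) ≠ 0 := by positivity
  have hprior : ((Fintype.card Hi : ℝ) + 1) / 2 =
      ∑ o, (#{h | M h = o} : ℝ) * (Fintype.card Hi + 1) / (2 * Fintype.card Hi) := by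
    rw [← sum_div, ← sum_mul, sum_card_fiber]
    field_simp
  rw [GE0, guess_unif, condGuessHO_unif, hprior, ← sum_sub_distrib]
  exact sum_congr rfl fun o _ => by ring

lemma GE0_unif_eq_zero {M : Hi → Oi} (hM : ∀ h h', M h = M h') : GE0 M (unif Hi) = 0 := by
  rw [GE0_unif]
  refine sum_eq_zero fun o _ => ?_
  by_cases ho : ∃ h, M h = o
  · obtain ⟨h₀, rfl⟩ := ho
    rw [filter_true_of_mem fun h _ => hM h h₀, card_univ, sub_self, mul_zero, zero_div]
  · rw [filter_false_of_mem fun h _ => not_exists.mp ho h, card_empty, Nat.cast_zero, zero_mul,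
      zero_div]

lemma one_half_le_GE0_unif {M : Hi → Oi} (hM : ∃ h h', M h ≠ M h') :
    1 / 2 ≤ GE0 M (unif Hi) := by
  obtain ⟨h₁, h₂, hne⟩ := hM
  have hn : (0 : ℝ) < Fintype.card Hi := by
    have : Nonempty Hi := ⟨h₁⟩
    positivity
  have hfiber : ∀ o, 1 ≤ (Fintype.card Hi : ℝ) - #{h | M h = o} := fun o => by
    obtain ⟨h, hh⟩ : ∃ h, M h ≠ o := by
      by_contra! hall
      exact hne ((hall h₁).trans (hall h₂).symm)
    have := card_lt_univ_of_notMem (s := {h | M h = o}) (by simpa using hh)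
    have : ((#{h | M h = o} : ℕ) : ℝ) + 1 ≤ Fintype.card Hi := by exact_mod_cast this
    linarith
  calc 1 / 2 = ∑ o, (#{h | M h = o} : ℝ) / (2 * Fintype.card Hi) := by
        rw [← sum_div, sum_card_fiber]
        field_simp
    _ ≤ ∑ o, (#{h | M h = o} : ℝ) * (Fintype.card Hi - #{h | M h = o}) /
          (2 * Fintype.card Hi) := by
        gcongr with o
        exact le_mul_of_one_le_right (Nat.cast_nonneg _) (hfiber o)
    _ = GE0 M (unif Hi) := (GE0_unif M).symm

end Uniform

theorem GE0_le_q_iff_noninterferent_general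
    [Fintype Hi] [Fintype Oi] [DecidableEq Oi]
    (q : ℝ) (hq0 : 0 < q) (hq : q < 1 / 2) (M : Hi → Oi) :
    (GE0 M (unif Hi) ≤ q ↔ ∀ h h' : Hi, M h = M h') ∧
      (GE0 M (unif Hi) ≠ 0 → 1 / 2 ≤ GE0 M (unif Hi)) := by
  by_cases hM : ∀ h h' : Hi, M h = M h'
  · have hzero := GE0_unif_eq_zero hM
    exact ⟨iff_of_true (hzero ▸ hq0.le) hM, fun hne => (hne hzero).elim⟩
  · have hhalf := one_half_le_GE0_unif (by simpa using hM)
    exact ⟨iff_of_false (by linarith) hM, fun _ => hhalf⟩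

/-- For `0 < q < 1/2`, `GE[U](M) ≤ q` iff `M` is non-interferent; in
particular, the minimum nonzero value of `GE[U]` is at least `1/2`. -/
theorem GE0_le_q_iff_noninterferent
    [Fintype Hi] [Fintype Oi] [DecidableEq Oi] [Nonempty Hi]
    (q : ℝ) (hq0 : 0 < q) (hq : q < 1 / 2) (M : Hi → Oi) :
    (GE0 M (unif Hi) ≤ q ↔ ∀ h h' : Hi, M h = M h') ∧
      (GE0 M (unif Hi) ≠ 0 → 1 / 2 ≤ GE0 M (unif Hi)) :=
  GE0_le_q_iff_noninterferent_general q hq0 hq M
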